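/- Let δ = ∂² - 2∂x and a ≠ 0. Define V = ∂[[0,1],[1,-ax]] - (2/a)I and N = ∂[[-ax,-1],[-1,0]] + [[-a-2/a,0],[0,-2/a]]. Then VN = diag(-δ + 2 + 4/a², -δ + 4/a²) as 2×2 matrix differential operators. -/

import Mathlib

open Matrix

/-- Entrywise derivative of a matrix-valued function of a real variable. -/
noncomputable def md (P : ℝ → Matrix (Fin 2) (Fin 2) ℝ) : ℝ → Matrix (Fin 2) (Fin 2) ℝ :=
  fun x => Matrix.of fun i j => deriv (fun t => P t i j) x

/-- The scalar Hermite operator δ = ∂² - 2∂x. -/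
noncomputable def hermDelta (f : ℝ → ℝ) : ℝ → ℝ :=
  fun x => deriv (deriv f) x - 2 * x * deriv f x

/-- The right action of `V = ∂[[0,1],[1,-ax]] - (2/a)I`. -/
noncomputable def actV (a : ℝ) (P : ℝ → Matrix (Fin 2) (Fin 2) ℝ) :
    ℝ → Matrix (Fin 2) (Fin 2) ℝ :=
  fun x => md P x * !![0, 1; 1, -a * x] + P x * ((-(2/a)) • (1 : Matrix (Fin 2) (Fin 2) ℝ))

/-- The right action of `N = ∂[[-ax,-1],[-1,0]] + [[-a-2/a,0],[0,-2/a]]`. -/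
noncomputable def actN (a : ℝ) (P : ℝ → Matrix (Fin 2) (Fin 2) ℝ) :
    ℝ → Matrix (Fin 2) (Fin 2) ℝ :=
  fun x => md P x * !![-a * x, -1; -1, 0] + P x * !![-a - 2/a, 0; 0, -2/a]

private lemma deriv_of_contDiffTop {f : ℝ → ℝ} (h : ContDiff ℝ (⊤ : ℕ∞) f) :
    Differentiable ℝ (deriv f) := by
  have h2 : ContDiff ℝ (⊤ : ℕ∞) f := h.of_le (by simp)
  exact ((contDiff_infty_iff_deriv.mp h2).2).differentiable (by simp)

/-- `VN = diag(-δ + 2 + 4/a², -δ + 4/a²)` as 2×2 matrix differential operators. -/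
theorem stmt13 (a : ℝ) (ha : a ≠ 0)
    (P : ℝ → Matrix (Fin 2) (Fin 2) ℝ)
    (hP : ∀ i j, ContDiff ℝ (⊤ : ℕ∞) fun t => P t i j) (x : ℝ) (i : Fin 2) :
    actN a (actV a P) x i 0 =
      -hermDelta (fun t => P t i 0) x + (2 + 4/a^2) * P x i 0 ∧
    actN a (actV a P) x i 1 =
      -hermDelta (fun t => P t i 1) x + (4/a^2) * P x i 1 := by
  have d0 : Differentiable ℝ (fun t => P t i 0) := (hP i 0).differentiable (by simp)
  have d1 : Differentiable ℝ (fun t => P t i 1) := (hP i 1).differentiable (by simp)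
  have d0' : Differentiable ℝ (deriv fun t => P t i 0) := deriv_of_contDiffTop (hP i 0)
  have d1' : Differentiable ℝ (deriv fun t => P t i 1) := deriv_of_contDiffTop (hP i 1)
  have hQ0 : (fun t => actV a P t i 0)
      = fun t => deriv (fun s => P s i 1) t - 2/a * P t i 0 := by
    funext t; simp [actV, md, Matrix.mul_apply, Fin.sum_univ_two, Matrix.one_apply]; ring
  have hQ1 : (fun t => actV a P t i 1)
      = fun t => deriv (fun s => P s i 0) t
          - a * t * deriv (fun s => P s i 1) t - 2/a * P t i 1 := by
    funext t; simp [actV, md, Matrix.mul_apply, Fin.sum_univ_two, Matrix.one_apply]; ring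
  have hdQ0 : deriv (fun t => actV a P t i 0) x
      = deriv (deriv fun s => P s i 1) x - 2/a * deriv (fun s => P s i 0) x := by
    rw [hQ0, deriv_fun_sub (d1' x) ((d0.const_mul (2/a)) x), deriv_const_mul _ (d0 x)]
  have hdQ1 : deriv (fun t => actV a P t i 1) x
      = deriv (deriv fun s => P s i 0) x
        - (a * deriv (fun s => P s i 1) x + a * x * deriv (deriv fun s => P s i 1) x)
        - 2/a * deriv (fun s => P s i 1) x := by
    have hax : DifferentiableAt ℝ (fun t : ℝ => a * t) x := (differentiable_id.const_mul a) x
    have hprod : DifferentiableAt ℝ (fun t => a * t * deriv (fun s => P s i 1) t) x :=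
      hax.mul (d1' x)
    rw [hQ1, deriv_fun_sub (f := fun t => deriv (fun s => P s i 0) t - a * t * deriv (fun s => P s i 1) t) ((d0' x).sub hprod) ((d1.const_mul (2/a)) x),
      deriv_fun_sub (d0' x) hprod, deriv_fun_mul hax (d1' x), deriv_const_mul _ (d1 x),
      deriv_const_mul _ (differentiableAt_fun_id), deriv_id'']
    ring
  constructor
  · simp only [actN, md, Matrix.mul_apply, Fin.sum_univ_two, Matrix.add_apply, Matrix.of_apply,
      Matrix.cons_val', Matrix.cons_val_zero, Matrix.cons_val_one, Matrix.head_cons,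
      Matrix.head_fin_const, Matrix.empty_val', Matrix.cons_val_fin_one]
    rw [hdQ0, hdQ1, congrFun hQ0 x, congrFun hQ1 x]
    simp only [hermDelta]
    field_simp
    ring
  · simp only [actN, md, Matrix.mul_apply, Fin.sum_univ_two, Matrix.add_apply, Matrix.of_apply,
      Matrix.cons_val', Matrix.cons_val_zero, Matrix.cons_val_one, Matrix.head_cons,
      Matrix.head_fin_const, Matrix.empty_val', Matrix.cons_val_fin_one]
    rw [hdQ0, hdQ1, congrFun hQ0 x, congrFun hQ1 x]
    simp only [hermDelta]
    field_simp
    ring
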